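/- arXiv:math/0701530 — 3 statements merged into one kernel-verified Lean document; each statement's English description precedes it below -/
import Mathlib

section
/- Let T > 0, let N ≥ 1 be an integer, let M > 0, and for each j = 1, …, N let K_j > 0, α_j > −1, β_j ∈ ℝ and γ_j ≥ 0 be constants. Let (y_n)_{n≥0} be a sequence of positive continuously differentiable functions on [0,T] such that y_0(t) ≤ M for all t ∈ [0,T], y_n(0) ≤ M for all n ≥ 1, and for every n ≥ 1 and every t ∈ [0,T] one has y_n'(t) ≤ Σ_{j=1}^{N} K_j t^{α_j} y_n(t)^{β_j} y_{n−1}(t)^{γ_j}. Then y_n(t) ≤ 2M for every n ≥ 0 and every t satisfying 0 ≤ t ≤ min( T , min_{j=1,…,N} ( (α_j+1) / ( N K_j 2^{max(β_j,0)+γ_j} M^{β_j+γ_j−1} ) )^{1/(α_j+1)} ). -/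
open Real Set

/-- Gronwall-type lemma for a sequence of functions satisfying iterated
differential inequalities with power-type right-hand sides. -/
theorem gronwall_type_sequence
    (T : ℝ) (hT : 0 < T) (N : ℕ) (hN : 1 ≤ N) (M : ℝ) (hM : 0 < M)
    (K α β γ : Fin N → ℝ)
    (hK : ∀ j, 0 < K j) (hα : ∀ j, -1 < α j) (hγ : ∀ j, 0 ≤ γ j)
    (y : ℕ → ℝ → ℝ) (y' : ℕ → ℝ → ℝ)
    (hpos : ∀ n, ∀ t ∈ Icc (0:ℝ) T, 0 < y n t)
    (hderiv : ∀ n, ∀ t ∈ Icc (0:ℝ) T,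
      HasDerivWithinAt (y n) (y' n t) (Icc (0:ℝ) T) t)
    (hy0 : ∀ t ∈ Icc (0:ℝ) T, y 0 t ≤ M)
    (hinit : ∀ n, 1 ≤ n → y n 0 ≤ M)
    (hineq : ∀ n, 1 ≤ n → ∀ t ∈ Icc (0:ℝ) T,
      y' n t ≤ ∑ j : Fin N,
        K j * t ^ (α j) * (y n t) ^ (β j) * (y (n - 1) t) ^ (γ j)) :
    ∀ n : ℕ, ∀ t : ℝ, 0 ≤ t →
      t ≤ min T (⨅ j : Fin N,
        ((α j + 1) /
          ((N : ℝ) * K j * (2:ℝ) ^ (max (β j) 0 + γ j) * M ^ (β j + γ j - 1)))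
            ^ (1 / (α j + 1))) →
      y n t ≤ 2 * M := by
  haveI : Nonempty (Fin N) := ⟨⟨0, hN⟩⟩
  have hα1 : ∀ j, 0 < α j + 1 := fun j => by linarith [hα j]
  have hN0 : (0:ℝ) < N := by exact_mod_cast Nat.lt_of_lt_of_le Nat.zero_lt_one hN
  set D : Fin N → ℝ := fun j =>
    (α j + 1) / ((N : ℝ) * K j * (2:ℝ) ^ (max (β j) 0 + γ j) * M ^ (β j + γ j - 1))
    with hD_def
  set thr : Fin N → ℝ := fun j => D j ^ (1 / (α j + 1)) with hthr_def
  set Ts : ℝ := min T (⨅ j, thr j) with hTs_def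
  have hden : ∀ j, 0 < (N : ℝ) * K j * (2:ℝ) ^ (max (β j) 0 + γ j) * M ^ (β j + γ j - 1) :=
    fun j => mul_pos (mul_pos (mul_pos hN0 (hK j)) (rpow_pos_of_pos two_pos _))
      (rpow_pos_of_pos hM _)
  have hD : ∀ j, 0 < D j := fun j => div_pos (hα1 j) (hden j)
  have hTsT : Ts ≤ T := min_le_left _ _
  have hTsthr : ∀ j, Ts ≤ thr j := fun j =>
    (min_le_right _ _).trans (ciInf_le ((Set.finite_range thr).bddBelow) j)
  set C : Fin N → ℝ := fun j => K j * (2:ℝ) ^ (max (β j) 0 + γ j) * M ^ (β j + γ j)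
    with hC_def
  have hCpos : ∀ j, 0 < C j := fun j =>
    mul_pos (mul_pos (hK j) (rpow_pos_of_pos two_pos _)) (rpow_pos_of_pos hM _)
  set F : ℝ → ℝ := fun s => ∑ j, C j * s ^ (α j + 1) / (α j + 1) with hF_def
  -- monotonicity of F
  have hFmono : ∀ a b : ℝ, 0 ≤ a → a ≤ b → F a ≤ F b := by
    intro a b ha hab
    apply Finset.sum_le_sum
    intro j _
    have h1 : a ^ (α j + 1) ≤ b ^ (α j + 1) := Real.rpow_le_rpow ha hab (hα1 j).le
    have h2 : C j * a ^ (α j + 1) ≤ C j * b ^ (α j + 1) :=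
      mul_le_mul_of_nonneg_left h1 (hCpos j).le
    exact (div_le_div_iff_of_pos_right (hα1 j)).mpr h2
  have hFstrict : ∀ a b : ℝ, 0 ≤ a → a < b → F a < F b := by
    intro a b ha hab
    apply Finset.sum_lt_sum_of_nonempty Finset.univ_nonempty
    intro j _
    have h1 : a ^ (α j + 1) < b ^ (α j + 1) := Real.rpow_lt_rpow ha hab (hα1 j)
    have h2 : C j * a ^ (α j + 1) < C j * b ^ (α j + 1) :=
      mul_lt_mul_of_pos_left h1 (hCpos j)
    exact (div_lt_div_iff_of_pos_right (hα1 j)).mpr h2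
  -- key bound : F s ≤ M for s ≤ Ts
  have hFle : ∀ s : ℝ, 0 ≤ s → s ≤ Ts → F s ≤ M := by
    intro s hs hsTs
    have hterm : ∀ j : Fin N, C j * s ^ (α j + 1) / (α j + 1) ≤ M / N := by
      intro j
      have hsthr : s ≤ thr j := hsTs.trans (hTsthr j)
      have h1 : s ^ (α j + 1) ≤ D j := by
        have h2 : s ^ (α j + 1) ≤ thr j ^ (α j + 1) :=
          Real.rpow_le_rpow hs hsthr (hα1 j).le
        have h3 : thr j ^ (α j + 1) = D j := by
          rw [hthr_def]
          rw [← Real.rpow_mul (hD j).le, one_div_mul_cancel (hα1 j).ne', Real.rpow_one]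
        rwa [h3] at h2
      have hkey : C j * D j / (α j + 1) = M / N := by
        have hMsplit : M ^ (β j + γ j) = M ^ (β j + γ j - 1) * M := by
          rw [← Real.rpow_add_one hM.ne' (β j + γ j - 1)]
          ring_nf
        have hPne : ((2:ℝ) ^ (max (β j) 0 + γ j)) ≠ 0 := (rpow_pos_of_pos two_pos _).ne'
        have hQne : (M ^ (β j + γ j - 1)) ≠ 0 := (rpow_pos_of_pos hM _).ne'
        rw [hC_def, hD_def]
        simp only
        rw [hMsplit]
        rw [div_eq_div_iff (hα1 j).ne' hN0.ne']
        field_simp [hPne, hQne, (hK j).ne', hN0.ne']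
      calc C j * s ^ (α j + 1) / (α j + 1)
          ≤ C j * D j / (α j + 1) := by
            exact (div_le_div_iff_of_pos_right (hα1 j)).mpr
              (mul_le_mul_of_nonneg_left h1 (hCpos j).le)
        _ = M / N := hkey
    calc F s ≤ ∑ _j : Fin N, M / N := Finset.sum_le_sum fun j _ => hterm j
      _ = M := by
          rw [Finset.sum_const, Finset.card_univ, Fintype.card_fin, nsmul_eq_mul]
          field_simp
  -- continuity facts
  have hycont : ∀ n, ContinuousOn (y n) (Icc (0:ℝ) T) :=
    fun n x hx => (hderiv n x hx).continuousWithinAt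
  have hFcont : Continuous F := by
    apply continuous_finset_sum
    intro j _
    have h1 : Continuous fun s : ℝ => s ^ (α j + 1) :=
      continuous_iff_continuousAt.2 fun x =>
        Real.continuousAt_rpow_const x _ (Or.inr (hα1 j).le)
    exact (continuous_const.mul h1).div_const _
  -- derivative of F
  have hF' : ∀ x : ℝ, 0 < x → HasDerivAt F (∑ j, C j * x ^ (α j)) x := by
    intro x hx
    apply HasDerivAt.fun_sum
    intro j _
    have h := ((Real.hasDerivAt_rpow_const (p := α j + 1) (Or.inl hx.ne')).const_mul
      (C j)).div_const (α j + 1)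
    convert h using 1
    · rfl
    rw [add_sub_cancel_right]
    field_simp [(hα1 j).ne']
  -- main induction
  intro n
  induction n with
  | zero =>
    intro t ht hts
    have htIcc : t ∈ Icc (0:ℝ) T := ⟨ht, hts.trans hTsT⟩
    linarith [hy0 t htIcc]
  | succ n ih =>
    intro t ht hts
    by_contra hcon
    push_neg at hcon
    have htT : t ≤ T := hts.trans hTsT
    have htIcc : t ∈ Icc (0:ℝ) T := ⟨ht, htT⟩
    have hn1 : 1 ≤ n + 1 := Nat.le_add_left 1 n
    -- the first time y (n+1) reaches 2M
    set B : Set ℝ := Icc 0 t ∩ (y (n + 1)) ⁻¹' (Ici (2 * M)) with hB_def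
    have hBne : t ∈ B := ⟨⟨ht, le_rfl⟩, hcon.le⟩
    have hBbdd : BddBelow B := ⟨0, fun s hs => hs.1.1⟩
    have hBclosed : IsClosed B :=
      ((hycont (n + 1)).mono (Icc_subset_Icc_right htT)).preimage_isClosed_of_isClosed
        isClosed_Icc isClosed_Ici
    set τ : ℝ := sInf B with hτ_def
    have hτB : τ ∈ B := hBclosed.csInf_mem ⟨t, hBne⟩ hBbdd
    have hτ0 : 0 ≤ τ := hτB.1.1
    have hτt : τ ≤ t := hτB.1.2
    have hτ2M : 2 * M ≤ y (n + 1) τ := hτB.2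
    have hτT : τ ≤ T := hτt.trans htT
    have hlt : ∀ s : ℝ, 0 ≤ s → s < τ → y (n + 1) s < 2 * M := by
      intro s hs0 hsτ
      by_contra h
      push_neg at h
      exact absurd (csInf_le hBbdd ⟨⟨hs0, hsτ.le.trans hτt⟩, h⟩) (not_le.mpr hsτ)
    -- the last time before τ that y (n+1) is below M
    set Cs : Set ℝ := Icc 0 τ ∩ (y (n + 1)) ⁻¹' (Iic M) with hCs_def
    have h0Cs : (0:ℝ) ∈ Cs := ⟨⟨le_rfl, hτ0⟩, hinit (n + 1) hn1⟩
    have hCsbdd : BddAbove Cs := ⟨τ, fun s hs => hs.1.2⟩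
    have hCsclosed : IsClosed Cs :=
      ((hycont (n + 1)).mono (Icc_subset_Icc_right hτT)).preimage_isClosed_of_isClosed
        isClosed_Icc isClosed_Iic
    set t1 : ℝ := sSup Cs with ht1_def
    have ht1Cs : t1 ∈ Cs := hCsclosed.csSup_mem ⟨0, h0Cs⟩ hCsbdd
    have ht10 : 0 ≤ t1 := ht1Cs.1.1
    have ht1τ : t1 ≤ τ := ht1Cs.1.2
    have ht1M : y (n + 1) t1 ≤ M := ht1Cs.2
    have hmid : ∀ s : ℝ, t1 < s → s ≤ τ → M < y (n + 1) s := by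
      intro s hs1 hsτ
      by_contra h
      push_neg at h
      exact absurd (le_csSup hCsbdd ⟨⟨ht10.trans hs1.le, hsτ⟩, h⟩) (not_le.mpr hs1)
    -- the derivative comparison
    have hdd : ∀ x ∈ Ioo t1 τ,
        HasDerivAt (fun s => y (n + 1) s - F s) (y' (n + 1) x - ∑ j, C j * x ^ (α j)) x := by
      intro x hx
      have hx0 : 0 < x := lt_of_le_of_lt ht10 hx.1
      have hxT : x < T := lt_of_lt_of_le hx.2 hτT
      have hxIcc : x ∈ Icc (0:ℝ) T := ⟨hx0.le, hxT.le⟩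
      exact ((hderiv (n + 1) x hxIcc).hasDerivAt (Icc_mem_nhds hx0 hxT)).sub (hF' x hx0)
    have hanti : AntitoneOn (fun s => y (n + 1) s - F s) (Icc t1 τ) := by
      apply antitoneOn_of_deriv_nonpos (convex_Icc _ _)
      · exact (((hycont (n + 1)).mono (Icc_subset_Icc ht10 hτT)).sub
          hFcont.continuousOn)
      · rw [interior_Icc]
        intro x hx
        exact (hdd x hx).differentiableAt.differentiableWithinAt
      · rw [interior_Icc]
        intro x hx
        rw [(hdd x hx).deriv]
        have hx0 : 0 < x := lt_of_le_of_lt ht10 hx.1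
        have hxT : x < T := lt_of_lt_of_le hx.2 hτT
        have hxIcc : x ∈ Icc (0:ℝ) T := ⟨hx0.le, hxT.le⟩
        have h1 := hineq (n + 1) hn1 x hxIcc
        simp only [Nat.add_sub_cancel] at h1
        have h2 : ∑ j, K j * x ^ (α j) * (y (n + 1) x) ^ (β j) * (y n x) ^ (γ j)
            ≤ ∑ j, C j * x ^ (α j) := by
          apply Finset.sum_le_sum
          intro j _
          have hMa : M ≤ y (n + 1) x := (hmid x hx.1 hx.2.le).le
          have ha2 : y (n + 1) x ≤ 2 * M := (hlt x hx0.le hx.2).le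
          have hb0 : 0 < y n x := hpos n x hxIcc
          have hb2 : y n x ≤ 2 * M := ih x hx0.le ((hx.2.le.trans hτt).trans hts)
          have hxα : (0:ℝ) ≤ x ^ (α j) := Real.rpow_nonneg hx0.le _
          have haβ : (y (n + 1) x) ^ (β j) ≤ 2 ^ (max (β j) 0) * M ^ (β j) := by
            rcases le_or_gt 0 (β j) with hb | hb
            · have h3 : (y (n + 1) x) ^ (β j) ≤ (2 * M) ^ (β j) :=
                Real.rpow_le_rpow (by linarith) ha2 hb
              rw [max_eq_left hb]
              rwa [Real.mul_rpow (by norm_num) hM.le] at h3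
            · rw [max_eq_right hb.le, Real.rpow_zero, one_mul]
              exact Real.rpow_le_rpow_of_nonpos hM hMa hb.le
          have hbγ : (y n x) ^ (γ j) ≤ 2 ^ (γ j) * M ^ (γ j) := by
            have h3 : (y n x) ^ (γ j) ≤ (2 * M) ^ (γ j) :=
              Real.rpow_le_rpow hb0.le hb2 (hγ j)
            rwa [Real.mul_rpow (by norm_num) hM.le] at h3
          calc K j * x ^ (α j) * (y (n + 1) x) ^ (β j) * (y n x) ^ (γ j)
              ≤ K j * x ^ (α j) * (2 ^ (max (β j) 0) * M ^ (β j))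
                * (2 ^ (γ j) * M ^ (γ j)) := by
                apply mul_le_mul
                · exact mul_le_mul_of_nonneg_left haβ
                    (mul_nonneg (hK j).le hxα)
                · exact hbγ
                · exact Real.rpow_nonneg hb0.le _
                · exact mul_nonneg (mul_nonneg (hK j).le hxα)
                    (mul_nonneg (Real.rpow_nonneg (by norm_num) _)
                      (Real.rpow_nonneg hM.le _))
            _ = C j * x ^ (α j) := by
                rw [hC_def]
                simp only
                rw [Real.rpow_add two_pos, Real.rpow_add hM]
                ring
        linarith
    -- put everything together
    have hIcc1 : t1 ∈ Icc t1 τ := ⟨le_rfl, ht1τ⟩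
    have hIcc2 : τ ∈ Icc t1 τ := ⟨ht1τ, le_rfl⟩
    have hest : y (n + 1) τ - F τ ≤ y (n + 1) t1 - F t1 := hanti hIcc1 hIcc2 ht1τ
    have hFt1 : 0 ≤ F t1 := by
      apply Finset.sum_nonneg
      intro j _
      exact div_nonneg (mul_nonneg (hCpos j).le (Real.rpow_nonneg ht10 _)) (hα1 j).le
    have hyτ : y (n + 1) τ ≤ M + F τ := by linarith
    have hFtM : F t ≤ M := hFle t ht hts
    rcases eq_or_lt_of_le hτt with heq | hlt2
    · have hFτ : F τ ≤ M := hFle τ hτ0 (hτt.trans hts)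
      rw [heq] at hyτ
      linarith
    · have hFτ : F τ < M := lt_of_lt_of_le (hFstrict τ t hτ0 hlt2) hFtM
      linarith
end

section
/- Let ν > 0, μ > 0 and let k ≥ 1 be an integer. Let u = (u¹,u²) : ℝ × ℝ² → ℝ², ω : ℝ × ℝ² → ℝ and F : ℝ² → ℝ be smooth functions, 2π-periodic in each spatial variable, with ∂₁u¹(t,x) + ∂₂u²(t,x) = 0 for all (t,x), and suppose that ∂_t ω + u·∇ω = ν Δω − μ ω + F holds at every point of ℝ × ℝ². If sup_{t∈ℝ} ‖ω(t,·)‖_{L^{2k}(Ω)} < ∞, then for every t ∈ ℝ one has ‖ω(t,·)‖_{L^{2k}(Ω)} ≤ ‖F‖_{L^{2k}(Ω)} / μ. -/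
open Real Set MeasureTheory

/-- Partial derivative in time of a function on ℝ × ℝ² (time, space). -/
noncomputable def dt (g : ℝ × ℝ × ℝ → ℝ) (p : ℝ × ℝ × ℝ) : ℝ :=
  fderiv ℝ g p (1, 0, 0)

/-- First spatial partial derivative. -/
noncomputable def dx1 (g : ℝ × ℝ × ℝ → ℝ) (p : ℝ × ℝ × ℝ) : ℝ :=
  fderiv ℝ g p (0, 1, 0)

/-- Second spatial partial derivative. -/
noncomputable def dx2 (g : ℝ × ℝ × ℝ → ℝ) (p : ℝ × ℝ × ℝ) : ℝ :=
  fderiv ℝ g p (0, 0, 1)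

/-- Spatial Laplacian. -/
noncomputable def lap (g : ℝ × ℝ × ℝ → ℝ) (p : ℝ × ℝ × ℝ) : ℝ :=
  dx1 (dx1 g) p + dx2 (dx2 g) p

/-- The periodic square Ω = [0,2π]². -/
def Om : Set (ℝ × ℝ) := Icc (0:ℝ) (2 * π) ×ˢ Icc (0:ℝ) (2 * π)

section Aux

lemma VD_mul {f g : ℝ × ℝ × ℝ → ℝ} {p : ℝ × ℝ × ℝ} (v : ℝ × ℝ × ℝ)
    (hf : DifferentiableAt ℝ f p) (hg : DifferentiableAt ℝ g p) :
    fderiv ℝ (fun q => f q * g q) p v = f p * fderiv ℝ g p v + g p * fderiv ℝ f p v := by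
  rw [fderiv_fun_mul hf hg]; simp

lemma VD_pow {f : ℝ × ℝ × ℝ → ℝ} {p : ℝ × ℝ × ℝ} (v : ℝ × ℝ × ℝ) (m : ℕ)
    (hf : DifferentiableAt ℝ f p) :
    fderiv ℝ (fun q => f q ^ m) p v = m * f p ^ (m - 1) * fderiv ℝ f p v := by
  have h : HasFDerivAt (fun q => f q ^ m) (((m : ℝ) * f p ^ (m - 1)) • fderiv ℝ f p) p :=
    (hasDerivAt_pow m (f p)).comp_hasFDerivAt p hf.hasFDerivAt
  rw [h.fderiv]; simp [mul_assoc]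

lemma slice_t {g : ℝ × ℝ × ℝ → ℝ} (hg : Differentiable ℝ g) (t x1 x2 : ℝ) :
    HasDerivAt (fun s => g (s, x1, x2)) (dt g (t, x1, x2)) t := by
  have hline : HasDerivAt (fun s : ℝ => ((s, x1, x2) : ℝ × ℝ × ℝ)) (1, 0, 0) t :=
    (hasDerivAt_id t).prodMk ((hasDerivAt_const t x1).prodMk (hasDerivAt_const t x2))
  exact (hg (t, x1, x2)).hasFDerivAt.comp_hasDerivAt t hline

lemma slice_x1 {g : ℝ × ℝ × ℝ → ℝ} (hg : Differentiable ℝ g) (t x1 x2 : ℝ) :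
    HasDerivAt (fun s => g (t, s, x2)) (dx1 g (t, x1, x2)) x1 := by
  have hline : HasDerivAt (fun s : ℝ => ((t, s, x2) : ℝ × ℝ × ℝ)) (0, 1, 0) x1 :=
    (hasDerivAt_const x1 t).prodMk ((hasDerivAt_id x1).prodMk (hasDerivAt_const x1 x2))
  exact (hg (t, x1, x2)).hasFDerivAt.comp_hasDerivAt x1 hline

lemma slice_x2 {g : ℝ × ℝ × ℝ → ℝ} (hg : Differentiable ℝ g) (t x1 x2 : ℝ) :
    HasDerivAt (fun s => g (t, x1, s)) (dx2 g (t, x1, x2)) x2 := by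
  have hline : HasDerivAt (fun s : ℝ => ((t, x1, s) : ℝ × ℝ × ℝ)) (0, 0, 1) x2 :=
    (hasDerivAt_const x2 t).prodMk ((hasDerivAt_const x2 x1).prodMk (hasDerivAt_id x2))
  exact (hg (t, x1, x2)).hasFDerivAt.comp_hasDerivAt x2 hline

lemma fderiv_shift {g : ℝ × ℝ × ℝ → ℝ} (hg : Differentiable ℝ g) {v : ℝ × ℝ × ℝ}
    (hper : ∀ p : ℝ × ℝ × ℝ, g (p + v) = g p) (p : ℝ × ℝ × ℝ) (w : ℝ × ℝ × ℝ) :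
    fderiv ℝ g (p + v) w = fderiv ℝ g p w := by
  have h1 : HasFDerivAt (fun q : ℝ × ℝ × ℝ => g (q + v)) (fderiv ℝ g (p + v)) p := by
    have h := ((hg (p + v)).hasFDerivAt.comp p ((hasFDerivAt_id p).add_const v))
    simpa [Function.comp_def] using h
  have h2 : (fun q : ℝ × ℝ × ℝ => g (q + v)) = g := funext hper
  rw [h2] at h1
  rw [h1.fderiv]

lemma contDiff_fderiv_apply {g : ℝ × ℝ × ℝ → ℝ} (hg : ContDiff ℝ (⊤ : ℕ∞) g) (w : ℝ × ℝ × ℝ) :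
    ContDiff ℝ (⊤ : ℕ∞) (fun p => fderiv ℝ g p w) :=
  (hg.fderiv_right (by simp)).clm_apply contDiff_const

end Aux

section IntZero

lemma isCompact_Om : IsCompact Om := isCompact_Icc.prod isCompact_Icc

lemma measurableSet_Om : MeasurableSet Om := (measurableSet_Icc.prod measurableSet_Icc)

lemma integrableOn_Om {f : ℝ × ℝ → ℝ} (hf : Continuous f) : IntegrableOn f Om :=
  hf.continuousOn.integrableOn_compact isCompact_Om

lemma integral_dx1_eq_zero {g : ℝ × ℝ × ℝ → ℝ} (hg : ContDiff ℝ (⊤ : ℕ∞) g)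
    (hper : ∀ t x1 x2 : ℝ, g (t, x1 + 2 * π, x2) = g (t, x1, x2)) (t : ℝ) :
    ∫ x in Om, dx1 g (t, x) = 0 := by
  have hdc : Continuous (dx1 g) := (contDiff_fderiv_apply hg (0, 1, 0)).continuous
  have hc : Continuous fun x : ℝ × ℝ => dx1 g (t, x) :=
    hdc.comp (continuous_const.prodMk continuous_id)
  have hInt : IntegrableOn (fun x : ℝ × ℝ => dx1 g (t, x)) Om := integrableOn_Om hc
  have hIntP : Integrable (Function.uncurry fun a b : ℝ => dx1 g (t, a, b))
      ((volume.restrict (Icc (0:ℝ) (2*π))).prod (volume.restrict (Icc (0:ℝ) (2*π)))) := by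
    rw [Measure.prod_restrict]
    rw [show ((volume : Measure ℝ).prod (volume : Measure ℝ)) = (volume : Measure (ℝ × ℝ)) from
      (Measure.volume_eq_prod ℝ ℝ).symm]
    exact hInt
  have hOm : (∫ x in Om, dx1 g (t, x)) =
      ∫ a in Icc (0:ℝ) (2*π), ∫ b in Icc (0:ℝ) (2*π), dx1 g (t, a, b) := by
    rw [Om, Measure.volume_eq_prod ℝ ℝ, setIntegral_prod]
    rw [← Measure.volume_eq_prod ℝ ℝ]
    exact hInt
  rw [hOm, MeasureTheory.integral_integral_swap hIntP]
  have hinner : ∀ b : ℝ, (∫ a in Icc (0:ℝ) (2*π), dx1 g (t, a, b)) = 0 := by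
    intro b
    rw [MeasureTheory.integral_Icc_eq_integral_Ioc,
      ← intervalIntegral.integral_of_le (by positivity : (0:ℝ) ≤ 2*π)]
    have hd : ∀ a ∈ uIcc (0:ℝ) (2*π), HasDerivAt (fun s => g (t, s, b)) (dx1 g (t, a, b)) a :=
      fun a _ => slice_x1 (hg.differentiable (by simp)) t a b
    rw [intervalIntegral.integral_eq_sub_of_hasDerivAt hd
      ((hdc.comp (by continuity)).intervalIntegrable 0 (2*π))]
    have := hper t 0 b
    simp only [zero_add] at this
    rw [this, sub_self]
  simp [hinner]

lemma integral_dx2_eq_zero {g : ℝ × ℝ × ℝ → ℝ} (hg : ContDiff ℝ (⊤ : ℕ∞) g)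
    (hper : ∀ t x1 x2 : ℝ, g (t, x1, x2 + 2 * π) = g (t, x1, x2)) (t : ℝ) :
    ∫ x in Om, dx2 g (t, x) = 0 := by
  have hdc : Continuous (dx2 g) := (contDiff_fderiv_apply hg (0, 0, 1)).continuous
  have hc : Continuous fun x : ℝ × ℝ => dx2 g (t, x) :=
    hdc.comp (continuous_const.prodMk continuous_id)
  have hInt : IntegrableOn (fun x : ℝ × ℝ => dx2 g (t, x)) Om := integrableOn_Om hc
  have hOm : (∫ x in Om, dx2 g (t, x)) =
      ∫ a in Icc (0:ℝ) (2*π), ∫ b in Icc (0:ℝ) (2*π), dx2 g (t, a, b) := by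
    rw [Om, Measure.volume_eq_prod ℝ ℝ, setIntegral_prod]
    rw [← Measure.volume_eq_prod ℝ ℝ]
    exact hInt
  rw [hOm]
  have hinner : ∀ a : ℝ, (∫ b in Icc (0:ℝ) (2*π), dx2 g (t, a, b)) = 0 := by
    intro a
    rw [MeasureTheory.integral_Icc_eq_integral_Ioc,
      ← intervalIntegral.integral_of_le (by positivity : (0:ℝ) ≤ 2*π)]
    have hd : ∀ b ∈ uIcc (0:ℝ) (2*π), HasDerivAt (fun s => g (t, a, s)) (dx2 g (t, a, b)) b :=
      fun b _ => slice_x2 (hg.differentiable (by simp)) t a b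
    rw [intervalIntegral.integral_eq_sub_of_hasDerivAt hd
      ((hdc.comp (by continuity)).intervalIntegrable 0 (2*π))]
    have := hper t a 0
    simp only [zero_add] at this
    rw [this, sub_self]
  simp [hinner]

end IntZero

section Aux2

lemma fderiv_perx1 {g : ℝ × ℝ × ℝ → ℝ} (hg : Differentiable ℝ g)
    (hper : ∀ t x1 x2 : ℝ, g (t, x1 + 2 * π, x2) = g (t, x1, x2))
    (w : ℝ × ℝ × ℝ) (t x1 x2 : ℝ) :
    fderiv ℝ g (t, x1 + 2 * π, x2) w = fderiv ℝ g (t, x1, x2) w := by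
  have h := fderiv_shift hg (v := ((0:ℝ), (2*π:ℝ), (0:ℝ)))
    (by rintro ⟨a, b, c⟩; simpa using hper a b c) (t, x1, x2) w
  simpa using h

lemma fderiv_perx2 {g : ℝ × ℝ × ℝ → ℝ} (hg : Differentiable ℝ g)
    (hper : ∀ t x1 x2 : ℝ, g (t, x1, x2 + 2 * π) = g (t, x1, x2))
    (w : ℝ × ℝ × ℝ) (t x1 x2 : ℝ) :
    fderiv ℝ g (t, x1, x2 + 2 * π) w = fderiv ℝ g (t, x1, x2) w := by
  have h := fderiv_shift hg (v := ((0:ℝ), (0:ℝ), (2*π:ℝ)))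
    (by rintro ⟨a, b, c⟩; simpa using hper a b c) (t, x1, x2) w
  simpa using h

instance : IsFiniteMeasure ((volume : Measure (ℝ × ℝ)).restrict Om) :=
  ⟨by rw [Measure.restrict_apply_univ]; exact isCompact_Om.measure_lt_top⟩

lemma hasDerivAt_intOm {G : ℝ × ℝ × ℝ → ℝ} (hG : ContDiff ℝ (⊤ : ℕ∞) G) (t : ℝ) :
    HasDerivAt (fun s => ∫ x in Om, G (s, x)) (∫ x in Om, dt G (t, x)) t := by
  have hGc : Continuous G := hG.continuous
  have hdtc : Continuous (dt G) := (contDiff_fderiv_apply hG (1, 0, 0)).continuous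
  set K : Set (ℝ × ℝ × ℝ) := Icc (t - 1) (t + 1) ×ˢ Om with hK
  have hKc : IsCompact K := isCompact_Icc.prod isCompact_Om
  obtain ⟨C, hC⟩ := hKc.exists_bound_of_continuousOn hdtc.continuousOn
  have key := hasDerivAt_integral_of_dominated_loc_of_deriv_le
    (μ := (volume : Measure (ℝ × ℝ)).restrict Om)
    (F := fun s x => G (s, x)) (F' := fun s x => dt G (s, x)) (x₀ := t)
    (bound := fun _ => C) (s := Metric.ball t 1) (Metric.ball_mem_nhds t one_pos)
    (Filter.Eventually.of_forall fun s =>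
      (hGc.comp (continuous_const.prodMk continuous_id)).aestronglyMeasurable)
    (integrableOn_Om (hGc.comp (continuous_const.prodMk continuous_id)))
    ((hdtc.comp (continuous_const.prodMk continuous_id)).aestronglyMeasurable)
    ?_ (integrable_const C) ?_
  · exact key.2
  · filter_upwards [self_mem_ae_restrict measurableSet_Om] with x hx
    intro s hs
    have hsI : s ∈ Icc (t - 1) (t + 1) := by
      have := mem_ball_iff_norm.mp hs
      rw [Real.norm_eq_abs, abs_sub_lt_iff] at this
      constructor <;> linarith [this.1, this.2]
    exact hC (s, x) ⟨hsI, hx⟩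
  · filter_upwards [self_mem_ae_restrict measurableSet_Om] with x _
    intro s _
    exact slice_t (hG.differentiable (by simp)) s x.1 x.2

lemma ode_bound {y D : ℝ → ℝ} {μ B Cb : ℝ} {n : ℕ} (hμ : 0 < μ) (hB : 0 ≤ B) (hn : 2 ≤ n)
    (hy0 : ∀ s, 0 ≤ y s) (hyd : ∀ s, HasDerivAt y (D s) s)
    (hD : ∀ s, D s ≤ (n : ℝ) * (B * y s ^ (1 - 1 / (n : ℝ)) - μ * y s))
    (hbdd : ∀ s, y s ≤ Cb) (t : ℝ) : y t ^ (1 / (n : ℝ)) ≤ B / μ := by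
  have hn0 : (0 : ℝ) < n := by positivity
  set c : ℝ := 1 / (n : ℝ) with hcdef
  have hc : 0 < c := by positivity
  have hnc : (n : ℝ) * c = 1 := by rw [hcdef]; field_simp
  have hc1 : c ≤ 1 := by
    rw [hcdef, div_le_one hn0]; exact_mod_cast Nat.one_le_iff_ne_zero.mpr (by omega)
  -- suffices to show `y t ^ c ≤ B / μ + δ` for all `δ > 0`
  have hsuff : ∀ δ : ℝ, 0 < δ → y t ^ c ≤ B / μ + δ := by
    intro δ hδ
    set ε : ℝ := δ ^ (n : ℝ) with hεdef
    have hε : 0 < ε := Real.rpow_pos_of_pos hδ _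
    have hεc : ε ^ c = δ := by
      rw [← Real.rpow_mul hδ.le, hnc, Real.rpow_one]
    set w : ℝ → ℝ := fun s => (y s + ε) ^ c with hwdef
    set K : ℝ := B / μ + ε ^ c with hKdef
    have hyε : ∀ s, 0 < y s + ε := fun s => by have := hy0 s; linarith
    have hw : ∀ s, HasDerivAt w (D s * c * (y s + ε) ^ (c - 1)) s := fun s =>
      HasDerivAt.rpow_const ((hyd s).add_const ε) (Or.inl (hyε s).ne')
    have hμK : μ * K = B + μ * ε ^ c := by rw [hKdef]; field_simp
    have hw' : ∀ s, D s * c * (y s + ε) ^ (c - 1) ≤ μ * K - μ * w s := by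
      intro s
      have hpos : (0:ℝ) < (y s + ε) ^ (c - 1) := Real.rpow_pos_of_pos (hyε s) _
      have h1 : D s * (c * (y s + ε) ^ (c - 1)) ≤
          ((n:ℝ) * (B * y s ^ (1 - c) - μ * y s)) * (c * (y s + ε) ^ (c - 1)) :=
        mul_le_mul_of_nonneg_right (hD s) (by positivity)
      have e1 : ((n:ℝ) * (B * y s ^ (1 - c) - μ * y s)) * (c * (y s + ε) ^ (c - 1))
          = B * (y s ^ (1 - c) * (y s + ε) ^ (c - 1)) - μ * (y s * (y s + ε) ^ (c - 1)) := by
        calc ((n:ℝ) * (B * y s ^ (1 - c) - μ * y s)) * (c * (y s + ε) ^ (c - 1))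
            = ((n:ℝ) * c) * ((B * y s ^ (1 - c) - μ * y s) * (y s + ε) ^ (c - 1)) := by ring
          _ = B * (y s ^ (1 - c) * (y s + ε) ^ (c - 1))
              - μ * (y s * (y s + ε) ^ (c - 1)) := by rw [hnc]; ring
      have e2 : y s ^ (1 - c) * (y s + ε) ^ (c - 1) ≤ 1 := by
        have h3 : y s ^ (1 - c) ≤ (y s + ε) ^ (1 - c) :=
          Real.rpow_le_rpow (hy0 s) (by linarith) (by linarith)
        have h4 : (y s + ε) ^ (1 - c) * (y s + ε) ^ (c - 1) = 1 := by
          rw [← Real.rpow_add (hyε s)]; norm_num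
        calc y s ^ (1 - c) * (y s + ε) ^ (c - 1)
            ≤ (y s + ε) ^ (1 - c) * (y s + ε) ^ (c - 1) :=
              mul_le_mul_of_nonneg_right h3 hpos.le
          _ = 1 := h4
      have h5 : (y s + ε) * (y s + ε) ^ (c - 1) = (y s + ε) ^ c := by
        have h := (Real.rpow_add (hyε s) 1 (c - 1)).symm
        rw [Real.rpow_one] at h
        simpa [show (1:ℝ) + (c - 1) = c by ring] using h
      have e3 : y s * (y s + ε) ^ (c - 1) = (y s + ε) ^ c - ε * (y s + ε) ^ (c - 1) := by
        linear_combination h5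
      have e4 : ε * (y s + ε) ^ (c - 1) ≤ ε ^ c := by
        have h6 : (y s + ε) ^ (c - 1) ≤ ε ^ (c - 1) :=
          Real.rpow_le_rpow_of_nonpos hε (by linarith [hy0 s]) (by linarith)
        have h7 : ε * ε ^ (c - 1) = ε ^ c := by
          have h := (Real.rpow_add hε 1 (c - 1)).symm
          rw [Real.rpow_one] at h
          simpa [show (1:ℝ) + (c - 1) = c by ring] using h
        calc ε * (y s + ε) ^ (c - 1) ≤ ε * ε ^ (c - 1) :=
              mul_le_mul_of_nonneg_left h6 hε.le
          _ = ε ^ c := h7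
      have e5 : B * (y s ^ (1 - c) * (y s + ε) ^ (c - 1)) ≤ B * 1 :=
        mul_le_mul_of_nonneg_left e2 hB
      have hfin : B * (y s ^ (1 - c) * (y s + ε) ^ (c - 1))
          - μ * (y s * (y s + ε) ^ (c - 1)) ≤ μ * K - μ * w s := by
        rw [e3]
        have h8 : μ * ((y s + ε) ^ c - ε ^ c) ≤ μ * ((y s + ε) ^ c - ε * (y s + ε) ^ (c - 1)) :=
          mul_le_mul_of_nonneg_left (by linarith) hμ.le
        have hws : w s = (y s + ε) ^ c := rfl
        rw [hws]
        linarith [hμK]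
      calc D s * c * (y s + ε) ^ (c - 1) = D s * (c * (y s + ε) ^ (c - 1)) := by ring
        _ ≤ ((n:ℝ) * (B * y s ^ (1 - c) - μ * y s)) * (c * (y s + ε) ^ (c - 1)) := h1
        _ = B * (y s ^ (1 - c) * (y s + ε) ^ (c - 1))
            - μ * (y s * (y s + ε) ^ (c - 1)) := e1
        _ ≤ μ * K - μ * w s := hfin
    have hφ : ∀ s, HasDerivAt (fun s' => Real.exp (μ * s') * (w s' - K))
        (Real.exp (μ * s) * μ * (w s - K)
          + Real.exp (μ * s) * (D s * c * (y s + ε) ^ (c - 1))) s := by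
      intro s
      have hexp : HasDerivAt (fun s' : ℝ => Real.exp (μ * s')) (Real.exp (μ * s) * μ) s := by
        have h := ((hasDerivAt_id s).const_mul μ).exp
        simpa using h
      exact hexp.mul ((hw s).sub_const K)
    have hφ' : ∀ s, Real.exp (μ * s) * μ * (w s - K)
        + Real.exp (μ * s) * (D s * c * (y s + ε) ^ (c - 1)) ≤ 0 := by
      intro s
      have h10 : Real.exp (μ * s) * (D s * c * (y s + ε) ^ (c - 1))
          ≤ Real.exp (μ * s) * (μ * K - μ * w s) :=
        mul_le_mul_of_nonneg_left (hw' s) (Real.exp_pos _).le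
      have h11 : Real.exp (μ * s) * μ * (w s - K)
          + Real.exp (μ * s) * (μ * K - μ * w s) = 0 := by ring
      linarith
    have hanti : Antitone (fun s => Real.exp (μ * s) * (w s - K)) :=
      antitone_of_deriv_nonpos (fun s => (hφ s).differentiableAt)
        (fun s => by rw [(hφ s).deriv]; exact hφ' s)
    set Cb' : ℝ := max Cb 0 with hCb'def
    have hwW : ∀ s, w s ≤ (Cb' + ε) ^ c := fun s =>
      Real.rpow_le_rpow (hyε s).le
        (by have := (hbdd s).trans (le_max_left Cb 0); linarith) hc.le
    set D0 : ℝ := max ((Cb' + ε) ^ c - K) 0 with hD0def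
    have hmain : ∀ s, s ≤ t → Real.exp (μ * t) * (w t - K) ≤ Real.exp (μ * s) * D0 := by
      intro s hs
      refine (hanti hs).trans ?_
      exact mul_le_mul_of_nonneg_left
        (le_trans (by linarith [hwW s]) (le_max_left _ _)) (Real.exp_pos _).le
    have hwtK : w t ≤ K := by
      by_contra hgt
      push_neg at hgt
      have hpos : 0 < Real.exp (μ * t) * (w t - K) :=
        mul_pos (Real.exp_pos _) (by linarith)
      have htend : Filter.Tendsto (fun s => Real.exp (μ * s) * D0) Filter.atBot (nhds 0) := by
        have h1 : Filter.Tendsto (fun s : ℝ => μ * s) Filter.atBot Filter.atBot :=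
          (Filter.tendsto_const_mul_atBot_of_pos hμ).mpr Filter.tendsto_id
        have h2 := Real.tendsto_exp_atBot.comp h1
        simpa using h2.mul_const D0
      have hev := (htend.eventually_lt_const hpos).and (Filter.eventually_le_atBot t)
      obtain ⟨s, hs1, hs2⟩ := hev.exists
      exact absurd (hmain s hs2) (not_le.mpr hs1)
    have hfinal : y t ^ c ≤ w t := Real.rpow_le_rpow (hy0 t) (by linarith [hε]) hc.le
    calc y t ^ c ≤ w t := hfinal
      _ ≤ K := hwtK
      _ = B / μ + δ := by rw [hKdef, hεc]
  by_contra hlt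
  push_neg at hlt
  have h1 : 0 < (y t ^ c - B / μ) / 2 := by linarith
  have := hsuff _ h1
  linarith

end Aux2

/-- On the global attractor (here: for solutions of the damped-driven
vorticity equation whose `L^{2k}` norm is bounded uniformly in time),
the vorticity satisfies `‖ω(t,·)‖_{L^{2k}} ≤ ‖rot f‖_{L^{2k}} / μ`. -/
theorem vorticity_L2k_bound_on_attractor
    (ν μ : ℝ) (hν : 0 < ν) (hμ : 0 < μ) (k : ℕ) (hk : 1 ≤ k)
    (u1 u2 ω : ℝ × ℝ × ℝ → ℝ) (F : ℝ × ℝ → ℝ)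
    (hu1 : ContDiff ℝ (⊤ : ℕ∞) u1) (hu2 : ContDiff ℝ (⊤ : ℕ∞) u2)
    (hω : ContDiff ℝ (⊤ : ℕ∞) ω) (hF : ContDiff ℝ (⊤ : ℕ∞) F)
    (hu1per : ∀ t x₁ x₂ : ℝ, u1 (t, x₁ + 2 * π, x₂) = u1 (t, x₁, x₂) ∧
      u1 (t, x₁, x₂ + 2 * π) = u1 (t, x₁, x₂))
    (hu2per : ∀ t x₁ x₂ : ℝ, u2 (t, x₁ + 2 * π, x₂) = u2 (t, x₁, x₂) ∧
      u2 (t, x₁, x₂ + 2 * π) = u2 (t, x₁, x₂))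
    (hωper : ∀ t x₁ x₂ : ℝ, ω (t, x₁ + 2 * π, x₂) = ω (t, x₁, x₂) ∧
      ω (t, x₁, x₂ + 2 * π) = ω (t, x₁, x₂))
    (hFper : ∀ x₁ x₂ : ℝ, F (x₁ + 2 * π, x₂) = F (x₁, x₂) ∧
      F (x₁, x₂ + 2 * π) = F (x₁, x₂))
    (hdiv : ∀ p : ℝ × ℝ × ℝ, dx1 u1 p + dx2 u2 p = 0)
    (hPDE : ∀ p : ℝ × ℝ × ℝ,
      dt ω p + (u1 p * dx1 ω p + u2 p * dx2 ω p)
        = ν * lap ω p - μ * ω p + F p.2)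
    (hbdd : ∃ C : ℝ, ∀ t : ℝ,
      (∫ x in Om, ω (t, x) ^ (2 * k)) ^ (1 / (2 * (k:ℝ))) ≤ C) :
    ∀ t : ℝ,
      (∫ x in Om, ω (t, x) ^ (2 * k)) ^ (1 / (2 * (k:ℝ)))
        ≤ (∫ x in Om, F x ^ (2 * k)) ^ (1 / (2 * (k:ℝ))) / μ := by
  set n : ℕ := 2 * k with hn
  have hn2 : 2 ≤ n := by omega
  have hEven : Even n := ⟨k, by omega⟩
  have hEven2 : Even (n - 2) := ⟨k - 1, by omega⟩
  have hnR : (0:ℝ) < (n:ℝ) := by positivity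
  have hωd : Differentiable ℝ ω := hω.differentiable (by simp)
  have hexp : 1 / (2 * (k:ℝ)) = 1 / ((n:ℕ):ℝ) := by rw [hn]; push_cast; ring
  have hωp1 : ∀ t x1 x2 : ℝ, ω (t, x1 + 2 * π, x2) = ω (t, x1, x2) :=
    fun t a b => (hωper t a b).1
  have hωp2 : ∀ t x1 x2 : ℝ, ω (t, x1, x2 + 2 * π) = ω (t, x1, x2) :=
    fun t a b => (hωper t a b).2
  -- the energy `y`
  set y : ℝ → ℝ := fun s => ∫ x in Om, ω (s, x) ^ n with hy
  have hy0 : ∀ s, 0 ≤ y s := fun s =>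
    setIntegral_nonneg measurableSet_Om fun x _ => hEven.pow_nonneg _
  have hyd : ∀ s, HasDerivAt y (∫ x in Om, dt (fun q => ω q ^ n) (s, x)) s :=
    fun s => hasDerivAt_intOm (hω.pow n) s
  have hdtpow : ∀ p : ℝ × ℝ × ℝ, dt (fun q => ω q ^ n) p
      = (n : ℝ) * ω p ^ (n - 1) * dt ω p := fun p => VD_pow (1, 0, 0) n (hωd p)
  -- the forcing norm `B`
  set B : ℝ := (∫ x in Om, F x ^ n) ^ (1 / (n:ℝ)) with hBdef
  have hBnn : 0 ≤ B :=
    Real.rpow_nonneg (setIntegral_nonneg measurableSet_Om fun x _ => hEven.pow_nonneg _) _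
  -- dissipation term
  have hins : ∀ s : ℝ, Continuous fun x : ℝ × ℝ => ((s, x) : ℝ × ℝ × ℝ) :=
    fun s => continuous_const.prodMk continuous_id
  have hdx1ω : ContDiff ℝ (⊤ : ℕ∞) (dx1 ω) := contDiff_fderiv_apply hω (0, 1, 0)
  have hdx2ω : ContDiff ℝ (⊤ : ℕ∞) (dx2 ω) := contDiff_fderiv_apply hω (0, 0, 1)
  have hcastn1 : ((n - 1 : ℕ) : ℝ) = (n : ℝ) - 1 := by
    rw [Nat.cast_sub (by omega)]; norm_num
  have hn2R : (2:ℝ) ≤ (n:ℝ) := by exact_mod_cast hn2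
  have hA : ∀ s, (∫ x in Om, ω (s, x) ^ (n - 1) * lap ω (s, x)) ≤ 0 := by
    intro s
    have hQ1 : ContDiff ℝ (⊤ : ℕ∞) (fun p => ω p ^ (n - 1) * dx1 ω p) := (hω.pow (n - 1)).mul hdx1ω
    have hQ2 : ContDiff ℝ (⊤ : ℕ∞) (fun p => ω p ^ (n - 1) * dx2 ω p) := (hω.pow (n - 1)).mul hdx2ω
    have hsub : n - 1 - 1 = n - 2 := by omega
    have hpt : ∀ p : ℝ × ℝ × ℝ, ω p ^ (n - 1) * lap ω p
        = dx1 (fun q => ω q ^ (n - 1) * dx1 ω q) p + dx2 (fun q => ω q ^ (n - 1) * dx2 ω q) p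
          - ((n : ℝ) - 1) * (ω p ^ (n - 2) * (dx1 ω p ^ 2 + dx2 ω p ^ 2)) := by
      intro p
      have h1 := VD_mul (f := fun q => ω q ^ (n - 1)) (g := dx1 ω) (p := p) (0, 1, 0)
        ((hωd p).pow _) (hdx1ω.differentiable (by simp) p)
      have h2 := VD_mul (f := fun q => ω q ^ (n - 1)) (g := dx2 ω) (p := p) (0, 0, 1)
        ((hωd p).pow _) (hdx2ω.differentiable (by simp) p)
      have p1 := VD_pow (f := ω) (p := p) (0, 1, 0) (n - 1) (hωd p)
      have p2 := VD_pow (f := ω) (p := p) (0, 0, 1) (n - 1) (hωd p)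
      rw [hsub, hcastn1] at p1 p2
      rw [p1] at h1
      rw [p2] at h2
      show ω p ^ (n - 1) * (dx1 (dx1 ω) p + dx2 (dx2 ω) p)
        = fderiv ℝ (fun q => ω q ^ (n - 1) * dx1 ω q) p (0, 1, 0)
          + fderiv ℝ (fun q => ω q ^ (n - 1) * dx2 ω q) p (0, 0, 1)
          - ((n : ℝ) - 1) * (ω p ^ (n - 2) * (dx1 ω p ^ 2 + dx2 ω p ^ 2))
      rw [h1, h2]
      show ω p ^ (n - 1) * (fderiv ℝ (dx1 ω) p (0, 1, 0) + fderiv ℝ (dx2 ω) p (0, 0, 1)) = _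
      have b1 : (fun q => ω q ^ (n - 1)) p = ω p ^ (n - 1) := rfl
      show _ = ω p ^ (n - 1) * fderiv ℝ (dx1 ω) p (0, 1, 0)
          + dx1 ω p * (((n : ℝ) - 1) * ω p ^ (n - 2) * fderiv ℝ ω p (0, 1, 0))
          + (ω p ^ (n - 1) * fderiv ℝ (dx2 ω) p (0, 0, 1)
            + dx2 ω p * (((n : ℝ) - 1) * ω p ^ (n - 2) * fderiv ℝ ω p (0, 0, 1)))
          - ((n : ℝ) - 1) * (ω p ^ (n - 2) * (dx1 ω p ^ 2 + dx2 ω p ^ 2))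
      have c1 : fderiv ℝ ω p (0, 1, 0) = dx1 ω p := rfl
      have c2 : fderiv ℝ ω p (0, 0, 1) = dx2 ω p := rfl
      rw [c1, c2]; ring
    have hcont1 : Continuous fun x : ℝ × ℝ => dx1 (fun q => ω q ^ (n - 1) * dx1 ω q) (s, x) :=
      (contDiff_fderiv_apply hQ1 (0, 1, 0)).continuous.comp (hins s)
    have hcont2 : Continuous fun x : ℝ × ℝ => dx2 (fun q => ω q ^ (n - 1) * dx2 ω q) (s, x) :=
      (contDiff_fderiv_apply hQ2 (0, 0, 1)).continuous.comp (hins s)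
    have hcont3 : Continuous fun x : ℝ × ℝ =>
        ω (s, x) ^ (n - 2) * (dx1 ω (s, x) ^ 2 + dx2 ω (s, x) ^ 2) :=
      ((hω.continuous.comp (hins s)).pow _).mul
        (((hdx1ω.continuous.comp (hins s)).pow 2).add ((hdx2ω.continuous.comp (hins s)).pow 2))
    have hi1 := integrableOn_Om hcont1
    have hi2 := integrableOn_Om hcont2
    have hi3 := integrableOn_Om hcont3
    have hz1 : (∫ x in Om, dx1 (fun q => ω q ^ (n - 1) * dx1 ω q) (s, x)) = 0 := by
      refine integral_dx1_eq_zero hQ1 ?_ s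
      intro t a b
      show ω (t, a + 2*π, b) ^ (n - 1) * dx1 ω (t, a + 2*π, b)
        = ω (t, a, b) ^ (n - 1) * dx1 ω (t, a, b)
      rw [hωp1 t a b, show dx1 ω (t, a + 2*π, b) = dx1 ω (t, a, b) from
        fderiv_perx1 hωd hωp1 (0, 1, 0) t a b]
    have hz2 : (∫ x in Om, dx2 (fun q => ω q ^ (n - 1) * dx2 ω q) (s, x)) = 0 := by
      refine integral_dx2_eq_zero hQ2 ?_ s
      intro t a b
      show ω (t, a, b + 2*π) ^ (n - 1) * dx2 ω (t, a, b + 2*π)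
        = ω (t, a, b) ^ (n - 1) * dx2 ω (t, a, b)
      rw [hωp2 t a b, show dx2 ω (t, a, b + 2*π) = dx2 ω (t, a, b) from
        fderiv_perx2 hωd hωp2 (0, 0, 1) t a b]
    have hIeq : (∫ x in Om, ω (s, x) ^ (n - 1) * lap ω (s, x))
        = (∫ x in Om, dx1 (fun q => ω q ^ (n - 1) * dx1 ω q) (s, x))
          + (∫ x in Om, dx2 (fun q => ω q ^ (n - 1) * dx2 ω q) (s, x))
          - ((n : ℝ) - 1) * ∫ x in Om,
              ω (s, x) ^ (n - 2) * (dx1 ω (s, x) ^ 2 + dx2 ω (s, x) ^ 2) := by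
      have hi12 : Integrable (fun x : ℝ × ℝ =>
          dx1 (fun q => ω q ^ (n - 1) * dx1 ω q) (s, x)
            + dx2 (fun q => ω q ^ (n - 1) * dx2 ω q) (s, x)) (volume.restrict Om) :=
        hi1.add hi2
      have hi3c : Integrable (fun x : ℝ × ℝ =>
          ((n : ℝ) - 1) * (ω (s, x) ^ (n - 2) * (dx1 ω (s, x) ^ 2 + dx2 ω (s, x) ^ 2)))
          (volume.restrict Om) := hi3.const_mul _
      calc (∫ x in Om, ω (s, x) ^ (n - 1) * lap ω (s, x))
          = ∫ x in Om, (dx1 (fun q => ω q ^ (n - 1) * dx1 ω q) (s, x)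
              + dx2 (fun q => ω q ^ (n - 1) * dx2 ω q) (s, x)
              - ((n : ℝ) - 1) * (ω (s, x) ^ (n - 2) * (dx1 ω (s, x) ^ 2 + dx2 ω (s, x) ^ 2))) :=
            integral_congr_ae (Filter.Eventually.of_forall fun x => hpt (s, x))
        _ = (∫ x in Om, (dx1 (fun q => ω q ^ (n - 1) * dx1 ω q) (s, x)
              + dx2 (fun q => ω q ^ (n - 1) * dx2 ω q) (s, x)))
              - ∫ x in Om, ((n : ℝ) - 1) * (ω (s, x) ^ (n - 2)
                * (dx1 ω (s, x) ^ 2 + dx2 ω (s, x) ^ 2)) := integral_sub hi12 hi3c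
        _ = (∫ x in Om, dx1 (fun q => ω q ^ (n - 1) * dx1 ω q) (s, x))
              + (∫ x in Om, dx2 (fun q => ω q ^ (n - 1) * dx2 ω q) (s, x))
              - ((n : ℝ) - 1) * ∫ x in Om,
                  ω (s, x) ^ (n - 2) * (dx1 ω (s, x) ^ 2 + dx2 ω (s, x) ^ 2) := by
            rw [integral_add hi1 hi2, MeasureTheory.integral_const_mul]
    rw [hIeq, hz1, hz2]
    have hnn : 0 ≤ ∫ x in Om, ω (s, x) ^ (n - 2) * (dx1 ω (s, x) ^ 2 + dx2 ω (s, x) ^ 2) :=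
      setIntegral_nonneg measurableSet_Om fun x _ =>
        mul_nonneg (hEven2.pow_nonneg _) (by positivity)
    nlinarith [mul_nonneg (by linarith : (0:ℝ) ≤ (n:ℝ) - 1) hnn]
  -- advection term vanishes
  have hV : ∀ s, (∫ x in Om,
      ω (s, x) ^ (n - 1) * (u1 (s, x) * dx1 ω (s, x) + u2 (s, x) * dx2 ω (s, x))) = 0 := by
    intro s
    have hG1 : ContDiff ℝ (⊤ : ℕ∞) (fun p => u1 p * ω p ^ n) := hu1.mul (hω.pow n)
    have hG2 : ContDiff ℝ (⊤ : ℕ∞) (fun p => u2 p * ω p ^ n) := hu2.mul (hω.pow n)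
    have hz1 : (∫ x in Om, dx1 (fun q => u1 q * ω q ^ n) (s, x)) = 0 := by
      refine integral_dx1_eq_zero hG1 ?_ s
      intro t a b
      show u1 (t, a + 2*π, b) * ω (t, a + 2*π, b) ^ n = u1 (t, a, b) * ω (t, a, b) ^ n
      rw [(hu1per t a b).1, hωp1 t a b]
    have hz2 : (∫ x in Om, dx2 (fun q => u2 q * ω q ^ n) (s, x)) = 0 := by
      refine integral_dx2_eq_zero hG2 ?_ s
      intro t a b
      show u2 (t, a, b + 2*π) * ω (t, a, b + 2*π) ^ n = u2 (t, a, b) * ω (t, a, b) ^ n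
      rw [(hu2per t a b).2, hωp2 t a b]
    have hpt : ∀ p : ℝ × ℝ × ℝ, dx1 (fun q => u1 q * ω q ^ n) p + dx2 (fun q => u2 q * ω q ^ n) p
        = (n : ℝ) * (ω p ^ (n - 1) * (u1 p * dx1 ω p + u2 p * dx2 ω p)) := by
      intro p
      have e1 := VD_mul (f := u1) (g := fun q => ω q ^ n) (p := p) (0, 1, 0)
        (hu1.differentiable (by simp) p) ((hωd p).pow n)
      have e2 := VD_mul (f := u2) (g := fun q => ω q ^ n) (p := p) (0, 0, 1)
        (hu2.differentiable (by simp) p) ((hωd p).pow n)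
      have p1 := VD_pow (f := ω) (p := p) (0, 1, 0) n (hωd p)
      have p2 := VD_pow (f := ω) (p := p) (0, 0, 1) n (hωd p)
      rw [p1] at e1
      rw [p2] at e2
      have hd : fderiv ℝ u1 p (0, 1, 0) + fderiv ℝ u2 p (0, 0, 1) = 0 := hdiv p
      show fderiv ℝ (fun q => u1 q * ω q ^ n) p (0, 1, 0)
          + fderiv ℝ (fun q => u2 q * ω q ^ n) p (0, 0, 1)
        = (n : ℝ) * (ω p ^ (n - 1) * (u1 p * fderiv ℝ ω p (0, 1, 0)
            + u2 p * fderiv ℝ ω p (0, 0, 1)))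
      rw [e1, e2]
      have b1 : (fun q => ω q ^ n) p = ω p ^ n := rfl
      linear_combination (ω p ^ n) * hd
    have hcont : Continuous fun x : ℝ × ℝ =>
        ω (s, x) ^ (n - 1) * (u1 (s, x) * dx1 ω (s, x) + u2 (s, x) * dx2 ω (s, x)) :=
      ((hω.continuous.comp (hins s)).pow _).mul
        (((hu1.continuous.comp (hins s)).mul (hdx1ω.continuous.comp (hins s))).add
          ((hu2.continuous.comp (hins s)).mul (hdx2ω.continuous.comp (hins s))))
    have hi1 : IntegrableOn (fun x : ℝ × ℝ => dx1 (fun q => u1 q * ω q ^ n) (s, x)) Om :=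
      integrableOn_Om ((contDiff_fderiv_apply hG1 (0, 1, 0)).continuous.comp (hins s))
    have hi2 : IntegrableOn (fun x : ℝ × ℝ => dx2 (fun q => u2 q * ω q ^ n) (s, x)) Om :=
      integrableOn_Om ((contDiff_fderiv_apply hG2 (0, 0, 1)).continuous.comp (hins s))
    have hIeq : (n : ℝ) * (∫ x in Om,
        ω (s, x) ^ (n - 1) * (u1 (s, x) * dx1 ω (s, x) + u2 (s, x) * dx2 ω (s, x))) = 0 := by
      rw [← MeasureTheory.integral_const_mul]
      calc (∫ x in Om, (n : ℝ) * (ω (s, x) ^ (n - 1)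
              * (u1 (s, x) * dx1 ω (s, x) + u2 (s, x) * dx2 ω (s, x))))
          = ∫ x in Om, (dx1 (fun q => u1 q * ω q ^ n) (s, x)
              + dx2 (fun q => u2 q * ω q ^ n) (s, x)) :=
            integral_congr_ae (Filter.Eventually.of_forall fun x => (hpt (s, x)).symm)
        _ = 0 := by rw [integral_add hi1 hi2, hz1, hz2, add_zero]
    exact (mul_eq_zero.mp hIeq).resolve_left hnR.ne'
  -- Hölder
  have hH : ∀ s, (∫ x in Om, ω (s, x) ^ (n - 1) * F x) ≤ y s ^ (1 - 1 / (n:ℝ)) * B := by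
    intro s
    set pr : ℝ := (n : ℝ) / ((n : ℝ) - 1) with hpr
    have hn1 : (1:ℝ) ≤ (n : ℝ) - 1 := by linarith
    have hn1' : ((n : ℝ) - 1) ≠ 0 := by linarith
    have hpq : Real.HolderConjugate pr ((n:ℕ) : ℝ) := by
      rw [Real.holderConjugate_iff]; constructor
      · rw [hpr, lt_div_iff₀ (by linarith)]; linarith
      · rw [hpr]; field_simp; ring
    have hfc : Continuous fun x : ℝ × ℝ => |ω (s, x)| ^ (n - 1) :=
      ((hω.continuous.comp (hins s)).abs).pow _
    have hgc : Continuous fun x : ℝ × ℝ => |F x| := hF.continuous.abs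
    have hmf : MemLp (fun x : ℝ × ℝ => |ω (s, x)| ^ (n - 1)) (ENNReal.ofReal pr)
        (volume.restrict Om) := by
      obtain ⟨Cf, hCf⟩ := isCompact_Om.exists_bound_of_continuousOn hfc.continuousOn
      exact MemLp.of_bound hfc.aestronglyMeasurable Cf
        (by filter_upwards [self_mem_ae_restrict measurableSet_Om] with x hx; exact hCf x hx)
    have hmg : MemLp (fun x : ℝ × ℝ => |F x|) (ENNReal.ofReal ((n:ℕ) : ℝ))
        (volume.restrict Om) := by
      obtain ⟨Cg, hCg⟩ := isCompact_Om.exists_bound_of_continuousOn hgc.continuousOn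
      exact MemLp.of_bound hgc.aestronglyMeasurable Cg
        (by filter_upwards [self_mem_ae_restrict measurableSet_Om] with x hx; exact hCg x hx)
    have hstep2 := integral_mul_le_Lp_mul_Lq_of_nonneg hpq
      (Filter.Eventually.of_forall fun x => by positivity)
      (Filter.Eventually.of_forall fun x => abs_nonneg (F x)) hmf hmg
    have hfp : (∫ x in Om, (|ω (s, x)| ^ (n - 1) : ℝ) ^ pr) = y s := by
      have hptw : ∀ x : ℝ × ℝ, (|ω (s, x)| ^ (n - 1) : ℝ) ^ pr = ω (s, x) ^ n := by
        intro x
        rw [← Real.rpow_natCast |ω (s, x)| (n - 1), ← Real.rpow_mul (abs_nonneg _)]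
        rw [show ((n - 1 : ℕ) : ℝ) * pr = ((n:ℕ) : ℝ) by rw [hcastn1, hpr]; field_simp]
        rw [Real.rpow_natCast, hEven.pow_abs]
      rw [integral_congr_ae (Filter.Eventually.of_forall hptw)]
    have hgq : (∫ x in Om, (|F x| : ℝ) ^ ((n:ℕ) : ℝ)) = ∫ x in Om, F x ^ n :=
      integral_congr_ae (Filter.Eventually.of_forall fun x => by
        show (|F x| : ℝ) ^ ((n:ℕ) : ℝ) = F x ^ n
        rw [Real.rpow_natCast, hEven.pow_abs])
    have hone : 1 / pr = 1 - 1 / (n : ℝ) := by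
      rw [hpr, one_div_div]; field_simp
    have hint1 : IntegrableOn (fun x : ℝ × ℝ => ω (s, x) ^ (n - 1) * F x) Om :=
      integrableOn_Om (((hω.continuous.comp (hins s)).pow _).mul hF.continuous)
    have hint2 : IntegrableOn (fun x : ℝ × ℝ => |ω (s, x)| ^ (n - 1) * |F x|) Om :=
      integrableOn_Om (hfc.mul hgc)
    have hstep1 : (∫ x in Om, ω (s, x) ^ (n - 1) * F x)
        ≤ ∫ x in Om, |ω (s, x)| ^ (n - 1) * |F x| := by
      refine integral_mono hint1 hint2 fun x => ?_
      calc ω (s, x) ^ (n - 1) * F x ≤ |ω (s, x) ^ (n - 1) * F x| := le_abs_self _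
        _ = |ω (s, x)| ^ (n - 1) * |F x| := by rw [abs_mul, abs_pow]
    calc (∫ x in Om, ω (s, x) ^ (n - 1) * F x)
        ≤ ∫ x in Om, |ω (s, x)| ^ (n - 1) * |F x| := hstep1
      _ ≤ (∫ x in Om, (|ω (s, x)| ^ (n - 1) : ℝ) ^ pr) ^ (1 / pr)
          * (∫ x in Om, (|F x| : ℝ) ^ ((n:ℕ) : ℝ)) ^ (1 / ((n:ℕ) : ℝ)) := hstep2
      _ = y s ^ (1 - 1 / (n : ℝ)) * B := by rw [hfp, hgq, hone]
  -- the differential inequality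
  have hclap : Continuous (lap ω) :=
    ((contDiff_fderiv_apply hdx1ω (0, 1, 0)).continuous).add
      ((contDiff_fderiv_apply hdx2ω (0, 0, 1)).continuous)
  have hD : ∀ s, (∫ x in Om, dt (fun q => ω q ^ n) (s, x))
      ≤ (n : ℝ) * (B * y s ^ (1 - 1 / (n:ℝ)) - μ * y s) := by
    intro s
    have hpt : ∀ x : ℝ × ℝ, dt (fun q => ω q ^ n) (s, x)
        = ((n : ℝ) * ν) * (ω (s, x) ^ (n - 1) * lap ω (s, x))
          - ((n : ℝ) * μ) * ω (s, x) ^ n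
          + (n : ℝ) * (ω (s, x) ^ (n - 1) * F x)
          - (n : ℝ) * (ω (s, x) ^ (n - 1)
              * (u1 (s, x) * dx1 ω (s, x) + u2 (s, x) * dx2 ω (s, x))) := by
      intro x
      rw [hdtpow (s, x)]
      have hp : dt ω (s, x) + (u1 (s, x) * dx1 ω (s, x) + u2 (s, x) * dx2 ω (s, x))
          = ν * lap ω (s, x) - μ * ω (s, x) + F x := hPDE (s, x)
      have hpow : ω (s, x) ^ n = ω (s, x) ^ (n - 1) * ω (s, x) := by
        rw [← pow_succ]; congr 1; omega
      linear_combination ((n : ℝ) * ω (s, x) ^ (n - 1)) * hp + ((n : ℝ) * μ) * hpow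
    have hc1 : Continuous fun x : ℝ × ℝ => ω (s, x) ^ (n - 1) * lap ω (s, x) :=
      ((hω.continuous.comp (hins s)).pow _).mul (hclap.comp (hins s))
    have hc2 : Continuous fun x : ℝ × ℝ => ω (s, x) ^ n := (hω.continuous.comp (hins s)).pow _
    have hc3 : Continuous fun x : ℝ × ℝ => ω (s, x) ^ (n - 1) * F x :=
      ((hω.continuous.comp (hins s)).pow _).mul hF.continuous
    have hc4 : Continuous fun x : ℝ × ℝ =>
        ω (s, x) ^ (n - 1) * (u1 (s, x) * dx1 ω (s, x) + u2 (s, x) * dx2 ω (s, x)) :=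
      ((hω.continuous.comp (hins s)).pow _).mul
        (((hu1.continuous.comp (hins s)).mul (hdx1ω.continuous.comp (hins s))).add
          ((hu2.continuous.comp (hins s)).mul (hdx2ω.continuous.comp (hins s))))
    have hi1 : Integrable (fun x : ℝ × ℝ =>
        ((n : ℝ) * ν) * (ω (s, x) ^ (n - 1) * lap ω (s, x))) (volume.restrict Om) :=
      (integrableOn_Om hc1).const_mul _
    have hi2 : Integrable (fun x : ℝ × ℝ => ((n : ℝ) * μ) * ω (s, x) ^ n)
        (volume.restrict Om) := (integrableOn_Om hc2).const_mul _
    have hi3 : Integrable (fun x : ℝ × ℝ => (n : ℝ) * (ω (s, x) ^ (n - 1) * F x))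
        (volume.restrict Om) := (integrableOn_Om hc3).const_mul _
    have hi4 : Integrable (fun x : ℝ × ℝ => (n : ℝ) * (ω (s, x) ^ (n - 1)
        * (u1 (s, x) * dx1 ω (s, x) + u2 (s, x) * dx2 ω (s, x)))) (volume.restrict Om) :=
      (integrableOn_Om hc4).const_mul _
    have hi12 : Integrable (fun x : ℝ × ℝ =>
        ((n : ℝ) * ν) * (ω (s, x) ^ (n - 1) * lap ω (s, x))
          - ((n : ℝ) * μ) * ω (s, x) ^ n) (volume.restrict Om) := hi1.sub hi2
    have hi123 : Integrable (fun x : ℝ × ℝ =>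
        ((n : ℝ) * ν) * (ω (s, x) ^ (n - 1) * lap ω (s, x))
          - ((n : ℝ) * μ) * ω (s, x) ^ n
          + (n : ℝ) * (ω (s, x) ^ (n - 1) * F x)) (volume.restrict Om) := hi12.add hi3
    have hIeq : (∫ x in Om, dt (fun q => ω q ^ n) (s, x))
        = ((n : ℝ) * ν) * (∫ x in Om, ω (s, x) ^ (n - 1) * lap ω (s, x))
          - ((n : ℝ) * μ) * (∫ x in Om, ω (s, x) ^ n)
          + (n : ℝ) * (∫ x in Om, ω (s, x) ^ (n - 1) * F x)
          - (n : ℝ) * (∫ x in Om, ω (s, x) ^ (n - 1)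
              * (u1 (s, x) * dx1 ω (s, x) + u2 (s, x) * dx2 ω (s, x))) := by
      calc (∫ x in Om, dt (fun q => ω q ^ n) (s, x))
          = ∫ x in Om, (((n : ℝ) * ν) * (ω (s, x) ^ (n - 1) * lap ω (s, x))
              - ((n : ℝ) * μ) * ω (s, x) ^ n
              + (n : ℝ) * (ω (s, x) ^ (n - 1) * F x)
              - (n : ℝ) * (ω (s, x) ^ (n - 1)
                  * (u1 (s, x) * dx1 ω (s, x) + u2 (s, x) * dx2 ω (s, x)))) :=
            integral_congr_ae (Filter.Eventually.of_forall hpt)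
        _ = _ := by
            rw [integral_sub hi123 hi4, integral_add hi12 hi3, integral_sub hi1 hi2,
              MeasureTheory.integral_const_mul, MeasureTheory.integral_const_mul,
              MeasureTheory.integral_const_mul, MeasureTheory.integral_const_mul]
    have hys : (∫ x in Om, ω (s, x) ^ n) = y s := rfl
    rw [hIeq, hys, hV s]
    have h1 : ((n : ℝ) * ν) * (∫ x in Om, ω (s, x) ^ (n - 1) * lap ω (s, x)) ≤ 0 :=
      mul_nonpos_of_nonneg_of_nonpos (by positivity) (hA s)
    have h4 : (n : ℝ) * (∫ x in Om, ω (s, x) ^ (n - 1) * F x)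
        ≤ (n : ℝ) * (y s ^ (1 - 1 / (n:ℝ)) * B) :=
      mul_le_mul_of_nonneg_left (hH s) hnR.le
    have hring : (n : ℝ) * (B * y s ^ (1 - 1 / (n:ℝ)) - μ * y s)
        = (n : ℝ) * (y s ^ (1 - 1 / (n:ℝ)) * B) - ((n : ℝ) * μ) * y s := by ring
    rw [hring]
    linarith
  -- uniform bound on y
  obtain ⟨C, hC⟩ := hbdd
  have hbdd' : ∀ s, y s ≤ (max C 0) ^ ((n:ℕ):ℝ) := by
    intro s
    have h1 : y s ^ (1 / (n:ℝ)) ≤ max C 0 := by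
      have h := hC s
      rw [hexp] at h
      exact h.trans (le_max_left _ _)
    have h2 : y s = (y s ^ ((1:ℝ) / (n:ℝ))) ^ ((n:ℕ):ℝ) := by
      rw [← Real.rpow_mul (hy0 s), div_mul_cancel₀ _ hnR.ne', Real.rpow_one]
    rw [h2]
    exact Real.rpow_le_rpow (Real.rpow_nonneg (hy0 s) _) h1 hnR.le
  intro t
  rw [hexp]
  exact ode_bound hμ hBnn hn2 hy0 hyd hD hbdd' t
end

section
/- Let κ > 0 and y₀ ≥ e, and set T = log 2 / ( 2 κ y₀ log(2y₀) ). Let y : [0,T] → (0,∞) be differentiable with y(0) ≤ y₀ and suppose y'(t) ≤ κ y(t)² log y(t) for all t ∈ [0,T]. Then y(t) ≤ 2 y₀ for all t ∈ [0,T]. -/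
open Real Set

/-- Logarithmic Gronwall-type ODE lemma: if `y' ≤ κ y² log y` and `y(0) ≤ y₀`
with `y₀ ≥ e`, then `y(t) ≤ 2 y₀` for `0 ≤ t ≤ log 2 / (2 κ y₀ log (2 y₀))`. -/
theorem log_gronwall
    (κ y₀ : ℝ) (hκ : 0 < κ) (hy₀ : Real.exp 1 ≤ y₀)
    (T : ℝ) (hT : T = Real.log 2 / (2 * κ * y₀ * Real.log (2 * y₀)))
    (y y' : ℝ → ℝ)
    (hpos : ∀ t ∈ Icc (0:ℝ) T, 0 < y t)
    (hderiv : ∀ t ∈ Icc (0:ℝ) T, HasDerivWithinAt y (y' t) (Icc (0:ℝ) T) t)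
    (hinit : y 0 ≤ y₀)
    (hineq : ∀ t ∈ Icc (0:ℝ) T, y' t ≤ κ * y t ^ 2 * Real.log (y t)) :
    ∀ t ∈ Icc (0:ℝ) T, y t ≤ 2 * y₀ := by
  have he : (0:ℝ) < Real.exp 1 := Real.exp_pos 1
  have hy0 : (0:ℝ) < y₀ := lt_of_lt_of_le he hy₀
  set a := Real.log y₀ with ha
  have ha1 : 1 ≤ a := by
    have := Real.log_le_log he hy₀
    rwa [Real.log_exp] at this
  have hl2 : 0 < Real.log 2 := Real.log_pos (by norm_num)
  have hlog2y : Real.log (2 * y₀) = Real.log 2 + a := Real.log_mul (by norm_num) hy0.ne'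
  have hl2y : 0 < Real.log (2 * y₀) := by rw [hlog2y]; linarith
  set k := 2 * κ * y₀ with hk
  have hkpos : 0 < k := by positivity
  have hTpos : 0 < T := by rw [hT]; positivity
  set c := Real.log 2 / Real.log (2 * y₀) with hc
  have hcpos : 0 < c := div_pos hl2 hl2y
  have hkT : k * T = c := by
    rw [hT, hc]; field_simp
  -- key inequality: a * exp c < log 2 + a
  have hkey : a * Real.exp c < Real.log 2 + a := by
    have h1 : 1 - c < Real.exp (-c) := by
      have := Real.add_one_lt_exp (x := -c) (by linarith : (-c : ℝ) ≠ 0)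
      linarith
    have hmul : Real.exp (-c) * Real.exp c = 1 := by
      rw [← Real.exp_add]; simp
    have h2 : (1 - c) * Real.exp c < 1 := by
      nlinarith [Real.exp_pos c]
    have h3 : 1 - c = a / (Real.log 2 + a) := by
      rw [hc, hlog2y]; field_simp; ring
    rw [h3] at h2
    have h4 : 0 < Real.log 2 + a := by linarith
    rw [div_mul_eq_mul_div, div_lt_one h4] at h2
    linarith
  -- the barrier function
  set B : ℝ → ℝ := fun t => Real.exp (a * Real.exp (k * t)) with hBdef
  have hlogB : ∀ t, Real.log (B t) = a * Real.exp (k * t) := by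
    intro t; rw [hBdef]; simp [Real.log_exp]
  have hBpos : ∀ t, 0 < B t := fun t => Real.exp_pos _
  have hB' : ∀ t, HasDerivAt B (k * (B t * Real.log (B t))) t := by
    intro t
    have h1 : HasDerivAt (fun t : ℝ => k * t) k t := by
      simpa using (hasDerivAt_id t).const_mul k
    have h2 : HasDerivAt (fun t : ℝ => Real.exp (k * t)) (Real.exp (k * t) * k) t :=
      h1.exp
    have h3 : HasDerivAt (fun t : ℝ => a * Real.exp (k * t)) (a * (Real.exp (k * t) * k)) t :=
      h2.const_mul a
    have h4 := h3.exp
    convert h4 using 1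
    rw [hlogB, hBdef]; ring
  have hBlt : ∀ t ∈ Icc (0:ℝ) T, B t < 2 * y₀ := by
    intro t ht
    have h1 : Real.exp (k * t) ≤ Real.exp c := by
      rw [← hkT]
      exact Real.exp_le_exp.mpr (by nlinarith [ht.2])
    have h2 : a * Real.exp (k * t) < Real.log (2 * y₀) := by
      rw [hlog2y]
      calc a * Real.exp (k * t) ≤ a * Real.exp c := by nlinarith
        _ < Real.log 2 + a := hkey
    calc B t = Real.exp (a * Real.exp (k * t)) := rfl
      _ < Real.exp (Real.log (2 * y₀)) := Real.exp_lt_exp.mpr h2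
      _ = 2 * y₀ := Real.exp_log (by positivity)
  have hBge : ∀ t ∈ Icc (0:ℝ) T, y₀ ≤ B t := by
    intro t ht
    have h1 : (1:ℝ) ≤ Real.exp (k * t) :=
      Real.one_le_exp (by nlinarith [ht.1])
    have h2 : a ≤ a * Real.exp (k * t) := by nlinarith
    calc y₀ = Real.exp a := (Real.exp_log hy0).symm
      _ ≤ Real.exp (a * Real.exp (k * t)) := Real.exp_le_exp.mpr h2
      _ = B t := rfl
  have hcont : ContinuousOn y (Icc 0 T) := fun t ht => (hderiv t ht).continuousWithinAt
  have hB0 : B 0 = y₀ := by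
    rw [hBdef]; simp [ha, Real.exp_log hy0]
  have main : ∀ ⦃x⦄, x ∈ Icc (0:ℝ) T → y x ≤ B x := by
    refine image_le_of_deriv_right_lt_deriv_boundary hcont
      (fun x hx => (hderiv x (Ico_subset_Icc_self hx)).mono_of_mem_nhdsWithin
        (Icc_mem_nhdsGE_of_mem hx))
      (by rw [hB0]; exact hinit) hB' ?_
    intro x hx heq
    have hxI : x ∈ Icc (0:ℝ) T := Ico_subset_Icc_self hx
    have h1 : y' x ≤ κ * B x ^ 2 * Real.log (B x) := by
      have := hineq x hxI
      rwa [heq] at this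
    have hBx : 0 < B x := hBpos x
    have hlogBx : 1 ≤ Real.log (B x) := by
      rw [hlogB]
      have h1 : (1:ℝ) ≤ Real.exp (k * x) := Real.one_le_exp (by nlinarith [hxI.1])
      nlinarith
    have hBlt' : B x < 2 * y₀ := hBlt x hxI
    have hBgey : Real.exp 1 ≤ B x := le_trans hy₀ (hBge x hxI)
    calc y' x ≤ κ * B x ^ 2 * Real.log (B x) := h1
      _ < k * (B x * Real.log (B x)) := by
        rw [hk]
        have hp : 0 < (2 * y₀ - B x) * (κ * B x * Real.log (B x)) :=
          mul_pos (by linarith) (by positivity)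
        nlinarith [hp]
  intro t ht
  exact le_trans (main ht) (hBlt t ht).le
end
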